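/- Suppose sequences (aᵢ), (bᵢ) of nonnegative reals satisfy a₁ ≥ L/4, b_i ≥ (∑_{j=1}^{i} a_j) − c and a_{i+1} ≥ (∑_{j=1}^{i} b_j) − c for all i ≥ 1, where 0 ≤ c ≤ L/100. Then for all i ≥ 1, b_i ≥ f(i)·L/3 and a_i ≥ (f(i) − 1/8)·L/3, where f(i) = 2^{i-4} + 1/2. Consequently, if additionally ∑_j a_j + ∑_j b_j ≤ n and L ≥ 1, the recursion can run for at most log₂ n + 4 steps. -/

import Mathlib

/-!
Writing `Aᵢ = ∑_{j ≤ i} aⱼ` and `Bᵢ = ∑_{j ≤ i} bⱼ`, the two recursions give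
`Aᵢ₊₁ ≥ Aᵢ + Bᵢ - c` and `Bᵢ₊₁ ≥ Bᵢ + Aᵢ₊₁ - c`. By induction this keeps
`Aᵢ ≥ f(i)·L/3 + c` and `Bᵢ ≥ (f(i+1) - 1/8)·L/3 + c`, since `f(i+1) = 2 f(i) - 1/2`.
Both bounds on `bᵢ` and `aᵢ₊₁` then follow by subtracting `c`, and `Aᵢ + Bᵢ ≥ 2^{i-4}·L`
bounds the number of steps logarithmically.
-/

noncomputable def augGrowthR (i : ℕ) : ℝ := 2 ^ ((i : ℤ) - 4) + 1 / 2

open Finset Real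

lemma augGrowthR_one : augGrowthR 1 = 5 / 8 := by
  norm_num [augGrowthR]

lemma augGrowthR_succ (i : ℕ) : augGrowthR (i + 1) = 2 * augGrowthR i - 1 / 2 := by
  rw [augGrowthR, augGrowthR, Nat.cast_succ,
    show (i : ℤ) + 1 - 4 = (i : ℤ) - 4 + 1 by ring, zpow_add_one₀ two_ne_zero]
  ring

lemma half_lt_augGrowthR (i : ℕ) : 1 / 2 < augGrowthR i := by
  have : (0 : ℝ) < 2 ^ ((i : ℤ) - 4) := by positivity
  rw [augGrowthR]
  linarith

lemma natCast_le_logb_add_four {i : ℕ} {n : ℝ} (h : augGrowthR i - 1 / 2 ≤ n) :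
    (i : ℝ) ≤ logb 2 n + 4 := by
  have hpow : (2 : ℝ) ^ ((i : ℝ) - 4) ≤ n := by
    rwa [show (i : ℝ) - 4 = (((i : ℤ) - 4 : ℤ) : ℝ) by push_cast; ring, rpow_intCast,
      ← add_sub_cancel_right ((2 : ℝ) ^ ((i : ℤ) - 4)) (1 / 2), ← augGrowthR]
  have hn : 0 < n := (rpow_pos_of_pos two_pos _).trans_le hpow
  linarith [(le_logb_iff_rpow_le one_lt_two hn).mpr hpow]

section PartialSums

variable {a b : ℕ → ℝ} {L c : ℝ}

theorem augGrowthR_le_partialSums (hL : 0 ≤ L) (hc : c ≤ L / 48) (ha1 : L / 4 ≤ a 1)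
    (hb : ∀ i, 1 ≤ i → (∑ j ∈ Icc 1 i, a j) - c ≤ b i)
    (ha : ∀ i, 1 ≤ i → (∑ j ∈ Icc 1 i, b j) - c ≤ a (i + 1)) {i : ℕ} (hi : 1 ≤ i) :
    augGrowthR i * L / 3 + c ≤ ∑ j ∈ Icc 1 i, a j ∧
      (augGrowthR (i + 1) - 1 / 8) * L / 3 + c ≤ ∑ j ∈ Icc 1 i, b j := by
  induction i, hi using Nat.le_induction with
  | base =>
    have hb1 := hb 1 le_rfl
    simp only [Icc_self, sum_singleton] at hb1 ⊢
    rw [augGrowthR_succ 1, augGrowthR_one]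
    constructor <;> linarith
  | succ i hi ih =>
    obtain ⟨hA, hB⟩ := ih
    have hfL : 0 ≤ (augGrowthR i - 1 / 8) * L :=
      mul_nonneg (by linarith [half_lt_augGrowthR i]) hL
    have hA' : augGrowthR (i + 1) * L / 3 + c ≤ ∑ j ∈ Icc 1 (i + 1), a j := by
      rw [sum_Icc_succ_top (by omega), augGrowthR_succ]
      rw [augGrowthR_succ] at hB
      nlinarith [ha i hi]
    refine ⟨hA', ?_⟩
    rw [sum_Icc_succ_top (by omega), augGrowthR_succ (i + 1)]
    nlinarith [hb (i + 1) (by omega)]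

end PartialSums

theorem augmentation_growth_general
    (a b : ℕ → ℝ) (L c : ℝ) (hL : 0 < L) (hc0 : 0 ≤ c) (hcL : c ≤ L / 100)
    (ha1 : L / 4 ≤ a 1)
    (hb : ∀ i, 1 ≤ i → (∑ j ∈ Finset.Icc 1 i, a j) - c ≤ b i)
    (ha : ∀ i, 1 ≤ i → (∑ j ∈ Finset.Icc 1 i, b j) - c ≤ a (i + 1)) :
    (∀ i, 1 ≤ i →
      augGrowthR i * L / 3 ≤ b i ∧ (augGrowthR i - 1 / 8) * L / 3 ≤ a i) ∧
    (∀ (i : ℕ) (n : ℝ), 1 ≤ i → 1 ≤ L →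
      (∑ j ∈ Finset.Icc 1 i, a j) + (∑ j ∈ Finset.Icc 1 i, b j) ≤ n →
      (i : ℝ) ≤ Real.logb 2 n + 4) := by
  have key := fun i (hi : 1 ≤ i) ↦
    augGrowthR_le_partialSums hL.le (by linarith) ha1 hb ha hi
  refine ⟨fun i hi ↦ ⟨by linarith [hb i hi, (key i hi).1], ?_⟩, fun i n hi hL1 hsum ↦ ?_⟩
  · obtain ⟨k, rfl⟩ := Nat.exists_eq_add_of_le' hi
    rcases k.eq_zero_or_pos with rfl | hk
    · rw [augGrowthR_one]
      linarith
    · linarith [ha k hk, (key k hk).2]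
  · obtain ⟨hA, hB⟩ := key i hi
    rw [augGrowthR_succ] at hB
    apply natCast_le_logb_add_four
    nlinarith [half_lt_augGrowthR i]

/-- Growth of the reachable sets in the augmentation algorithm: if
`a₁ ≥ L/4`, `bᵢ ≥ (∑_{j≤i} aⱼ) − c` and `aᵢ₊₁ ≥ (∑_{j≤i} bⱼ) − c` with
`0 ≤ c ≤ L/100`, then `bᵢ ≥ f(i)·L/3` and `aᵢ ≥ (f(i) − 1/8)·L/3` for all
`i ≥ 1`; consequently if `∑_{j≤i} aⱼ + ∑_{j≤i} bⱼ ≤ n` and `L ≥ 1` then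
`i ≤ log₂ n + 4`. -/
theorem augmentation_growth
    (a b : ℕ → ℝ) (L c : ℝ) (hL : 0 < L) (hc0 : 0 ≤ c) (hcL : c ≤ L / 100)
    (ha0 : ∀ i, 0 ≤ a i) (hb0 : ∀ i, 0 ≤ b i)
    (ha1 : L / 4 ≤ a 1)
    (hb : ∀ i, 1 ≤ i → (∑ j ∈ Finset.Icc 1 i, a j) - c ≤ b i)
    (ha : ∀ i, 1 ≤ i → (∑ j ∈ Finset.Icc 1 i, b j) - c ≤ a (i + 1)) :
    (∀ i, 1 ≤ i →
      augGrowthR i * L / 3 ≤ b i ∧ (augGrowthR i - 1 / 8) * L / 3 ≤ a i) ∧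
    (∀ (i : ℕ) (n : ℝ), 1 ≤ i → 1 ≤ L →
      (∑ j ∈ Finset.Icc 1 i, a j) + (∑ j ∈ Finset.Icc 1 i, b j) ≤ n →
      (i : ℝ) ≤ Real.logb 2 n + 4) :=
  augmentation_growth_general a b L c hL hc0 hcL ha1 hb ha
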